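/- Let α be a k-algebra automorphism of A and ⟪-,-⟫ a double bracket on A associated with the α-twisted inner bimodule structure. With ⟪a₁⊗a₂, b⟫_R := a₁⊗⟪a₂,b⟫ and α₁ = α⊗id⊗id on A⊗A⊗A, define the right α-twisted double Jacobiator ⟪a,b,c⟫_{R,α} := α₁⟪⟪a,b⟫,c⟫_R + τ_{(123)}α₁⟪⟪b,c⟫,a⟫_R + τ_{(132)}α₁⟪⟪c,a⟫,b⟫_R. If m(⟪a,b,c⟫_{R,α}) = m(⟪a,c,b⟫_{R,α}) for all a,b,c ∈ A, where m : A⊗A⊗A → A is multiplication of the three factors, then {a,b}_m := ⟪a,b⟫'⟪a,b⟫'' is a right Loday bracket on A (i.e. {{a,b}_m,c}_m = {a,{b,c}_m}_m + {{a,c}_m,b}_m for all a,b,c), and it descends to a Lie bracket on A/[A,A]. -/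
import Mathlib


open scoped TensorProduct

noncomputable section

/-- A (`k`-linear) `A`-bimodule-type structure on a `k`-module `M`,
given by a three-slot action `a · d · b`. -/
structure BimodOn (k A M : Type*) [CommSemiring k] [Ring A] [Algebra k A]
    [AddCommMonoid M] [Module k M] where
  act : A → M → A → M
  add_left : ∀ (a a' : A) (d : M) (b : A), act (a + a') d b = act a d b + act a' d b
  add_mid : ∀ (a : A) (d d' : M) (b : A), act a (d + d') b = act a d b + act a d' b
  add_right : ∀ (a : A) (d : M) (b b' : A), act a d (b + b') = act a d b + act a d b'
  smul_left : ∀ (c : k) (a : A) (d : M) (b : A), act (c • a) d b = c • act a d b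
  smul_mid : ∀ (c : k) (a : A) (d : M) (b : A), act a (c • d) b = c • act a d b
  smul_right : ∀ (c : k) (a : A) (d : M) (b : A), act a d (c • b) = c • act a d b
  act_one_one : ∀ d : M, act 1 d 1 = d
  act_mul : ∀ (a a' : A) (d : M) (b b' : A), act a (act a' d b') b = act (a * a') d (b' * b)

/-- An `A`-bimodule structure on `A ⊗[k] A`. -/
abbrev BimodStr (k A : Type*) [CommSemiring k] [Ring A] [Algebra k A] :=
  BimodOn k A (A ⊗[k] A)

section Defs

variable (k A : Type*) [CommSemiring k] [Ring A] [Algebra k A]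

/-- The swap automorphism `°` of `A ⊗[k] A`, `a ⊗ b ↦ b ⊗ a`. -/
def swapT : A ⊗[k] A →ₗ[k] A ⊗[k] A := (TensorProduct.comm k A A).toLinearMap

variable {k A}

namespace BimodOn

/-- The swap bimodule structure `a * d * b = (a · d° · b)°` associated with a
bimodule structure on `A ⊗[k] A`. -/
def star (S : BimodStr k A) (a : A) (d : A ⊗[k] A) (b : A) : A ⊗[k] A :=
  swapT k A (S.act a (swapT k A d) b)

/-- A bimodule structure on `A ⊗[k] A` is swap-commuting if it commutes with its
swap bimodule structure. -/
def SwapCommuting (S : BimodStr k A) : Prop :=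
  ∀ (a₁ a₂ b₁ b₂ : A) (d : A ⊗[k] A),
    S.act a₁ (S.star a₂ d b₂) b₁ = S.star a₂ (S.act a₁ d b₁) b₂

end BimodOn

end Defs

/-- A double bracket on `A` associated with a bimodule structure `S` on `A ⊗[k] A`
(with swap bimodule structure `S.star`). -/
structure DoubleBracket {k A : Type*} [CommSemiring k] [Ring A] [Algebra k A]
    (S : BimodStr k A) where
  br : A →ₗ[k] A →ₗ[k] A ⊗[k] A
  antisymm : ∀ a b : A, br a b = - swapT k A (br b a)
  leibniz_right : ∀ a b c : A, br a (b * c) = S.act b (br a c) 1 + S.act 1 (br a b) c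
  leibniz_left : ∀ a b c : A, br (b * c) a = S.star b (br c a) 1 + S.star 1 (br b a) c

section Taus

variable (k A : Type*) [CommSemiring k] [Ring A] [Algebra k A]

/-- `τ_{(123)}` on `A^{⊗3}`: `a ⊗ b ⊗ c ↦ c ⊗ a ⊗ b`. -/
def tau123 : (A ⊗[k] A) ⊗[k] A →ₗ[k] (A ⊗[k] A) ⊗[k] A :=
  ((TensorProduct.comm k (A ⊗[k] A) A).trans (TensorProduct.assoc k A A A).symm).toLinearMap

/-- `τ_{(132)}` on `A^{⊗3}`: `a ⊗ b ⊗ c ↦ b ⊗ c ⊗ a`. -/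
def tau132 : (A ⊗[k] A) ⊗[k] A →ₗ[k] (A ⊗[k] A) ⊗[k] A :=
  ((TensorProduct.assoc k A A A).trans (TensorProduct.comm k A (A ⊗[k] A))).toLinearMap

/-- `τ_{(12)}` on `A^{⊗3}`: `a ⊗ b ⊗ c ↦ b ⊗ a ⊗ c`. -/
def tau12 : (A ⊗[k] A) ⊗[k] A →ₗ[k] (A ⊗[k] A) ⊗[k] A :=
  (TensorProduct.congr (TensorProduct.comm k A A) (LinearEquiv.refl k A)).toLinearMap

variable {k A}

/-- `⟪a, -⟫_L : A ⊗ A → A ⊗ A ⊗ A`, `b₁ ⊗ b₂ ↦ ⟪a, b₁⟫ ⊗ b₂`. -/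
def trL (br : A →ₗ[k] A →ₗ[k] A ⊗[k] A) (a : A) :
    A ⊗[k] A →ₗ[k] (A ⊗[k] A) ⊗[k] A :=
  TensorProduct.map (br a) LinearMap.id

/-- The double Jacobiator of a bilinear operation `A × A → A ⊗ A`:
`⟪a,b,c⟫ = ⟪a,⟪b,c⟫⟫_L + τ_{(123)} ⟪b,⟪c,a⟫⟫_L + τ_{(132)} ⟪c,⟪a,b⟫⟫_L`. -/
def jac (br : A →ₗ[k] A →ₗ[k] A ⊗[k] A) (a b c : A) : (A ⊗[k] A) ⊗[k] A :=
  trL br a (br b c) + tau123 k A (trL br b (br c a)) + tau132 k A (trL br c (br a b))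

end Taus

end

/-- The `k`-span of commutators `[A,A]` in `A`. -/
def commSpan (k A : Type*) [CommSemiring k] [Ring A] [Algebra k A] : Submodule k A :=
  Submodule.span k {x : A | ∃ a b : A, x = a * b - b * a}

/-- The multiplication map `m ∘ ⟪-,-⟫ : A × A → A`, `{a,b}_m = ⟪a,b⟫'⟪a,b⟫''`. -/
noncomputable def brm {k A : Type*} [CommSemiring k] [Ring A] [Algebra k A]
    (br : A →ₗ[k] A →ₗ[k] A ⊗[k] A) (a b : A) : A :=
  LinearMap.mul' k A (br a b)

/-- Multiplication of the three tensor factors, `m : A^{⊗3} → A`. -/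
noncomputable def mulT3 (k A : Type*) [CommSemiring k] [Ring A] [Algebra k A] :
    (A ⊗[k] A) ⊗[k] A →ₗ[k] A :=
  (LinearMap.mul' k A).comp (TensorProduct.map (LinearMap.mul' k A) LinearMap.id)

/-- `⟪-, b⟫_R : A ⊗ A → A^{⊗3}`, `a₁ ⊗ a₂ ↦ a₁ ⊗ ⟪a₂, b⟫`. -/
noncomputable def trR {k A : Type*} [CommSemiring k] [Ring A] [Algebra k A]
    (br : A →ₗ[k] A →ₗ[k] A ⊗[k] A) (b : A) :
    A ⊗[k] A →ₗ[k] (A ⊗[k] A) ⊗[k] A :=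
  ((TensorProduct.assoc k A A A).symm.toLinearMap).comp
    (TensorProduct.map LinearMap.id (br.flip b))

/-- `α₁ = α ⊗ id ⊗ id` on `A^{⊗3}`. -/
noncomputable def alpha1 {k A : Type*} [CommSemiring k] [Ring A] [Algebra k A]
    (α : A ≃ₐ[k] A) : (A ⊗[k] A) ⊗[k] A →ₗ[k] (A ⊗[k] A) ⊗[k] A :=
  TensorProduct.map (TensorProduct.map α.toLinearMap LinearMap.id) LinearMap.id

/-- The right `α`-twisted double Jacobiator
`⟪a,b,c⟫_{R,α} = α₁⟪⟪a,b⟫,c⟫_R + τ_{(123)} α₁⟪⟪b,c⟫,a⟫_R + τ_{(132)} α₁⟪⟪c,a⟫,b⟫_R`. -/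
noncomputable def jacRAlpha {k A : Type*} [CommSemiring k] [Ring A] [Algebra k A]
    (α : A ≃ₐ[k] A) (br : A →ₗ[k] A →ₗ[k] A ⊗[k] A) (a b c : A) :
    (A ⊗[k] A) ⊗[k] A :=
  alpha1 α (trR br c (br a b)) + tau123 k A (alpha1 α (trR br a (br b c)))
    + tau132 k A (alpha1 α (trR br b (br c a)))

section AuxLemmas

variable {k A : Type*} [CommSemiring k] [Ring A] [Algebra k A]

set_option synthInstance.maxHeartbeats 400000

/-- `w ⊗ (p ⊗ q) ↦ p * w * q`. -/
noncomputable def Nmap (k A : Type*) [CommSemiring k] [Ring A] [Algebra k A] :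
    A ⊗[k] (A ⊗[k] A) →ₗ[k] A :=
  (LinearMap.mul' k A) ∘ₗ (TensorProduct.map LinearMap.id (LinearMap.mul' k A)) ∘ₗ
    (TensorProduct.leftComm k A A A).toLinearMap

@[simp] lemma Nmap_tmul (w p q : A) :
    Nmap k A (w ⊗ₜ[k] (p ⊗ₜ[k] q)) = p * w * q := by
  simp [Nmap, mul_assoc]

variable (α : A ≃ₐ[k] A) (br : A →ₗ[k] A →ₗ[k] A ⊗[k] A)

/-- `x ⊗ y ↦ α x * m ⟪y,c⟫`. -/
noncomputable def E1 (c : A) : A ⊗[k] A →ₗ[k] A :=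
  (LinearMap.mul' k A) ∘ₗ
    TensorProduct.map α.toLinearMap ((LinearMap.mul' k A) ∘ₗ br.flip c)

@[simp] lemma E1_tmul (c x y : A) :
    E1 α br c (x ⊗ₜ[k] y) = α x * LinearMap.mul' k A (br y c) := by
  simp [E1]

/-- `x ⊗ y ↦ m ⟪x,c⟫ * α y`. -/
noncomputable def E2 (c : A) : A ⊗[k] A →ₗ[k] A :=
  (LinearMap.mul' k A) ∘ₗ
    TensorProduct.map ((LinearMap.mul' k A) ∘ₗ br.flip c) α.toLinearMap

@[simp] lemma E2_tmul (c x y : A) :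
    E2 α br c (x ⊗ₜ[k] y) = LinearMap.mul' k A (br x c) * α y := by
  simp [E2]

/-- `x ⊗ y ↦ ⟪a,y⟫' * α x * ⟪a,y⟫''`. -/
noncomputable def Mm (a : A) : A ⊗[k] A →ₗ[k] A :=
  Nmap k A ∘ₗ TensorProduct.map α.toLinearMap (br a)

@[simp] lemma Mm_tmul (a x y : A) :
    Mm α br a (x ⊗ₜ[k] y) = Nmap k A (α x ⊗ₜ[k] br a y) := by
  simp [Mm]

/-- `x ⊗ y ↦ Nmap (α x ⊗ (br y a)°)`. -/
noncomputable def Mm2 (a : A) : A ⊗[k] A →ₗ[k] A :=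
  Nmap k A ∘ₗ TensorProduct.map α.toLinearMap (swapT k A ∘ₗ br.flip a)

@[simp] lemma Mm2_tmul (a x y : A) :
    Mm2 α br a (x ⊗ₜ[k] y) = Nmap k A (α x ⊗ₜ[k] swapT k A (br y a)) := by
  simp [Mm2]

@[simp] lemma swapT_tmul (x y : A) : swapT k A (x ⊗ₜ[k] y) = y ⊗ₜ[k] x := rfl

lemma swapT_swapT (d : A ⊗[k] A) : swapT k A (swapT k A d) = d := by
  induction d using TensorProduct.induction_on with
  | zero => simp
  | tmul x y => rfl
  | add u v hu hv => simp [map_add, hu, hv]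

lemma G1_apply (c : A) (d : A ⊗[k] A) :
    mulT3 k A (alpha1 α (trR br c d)) = E1 α br c d := by
  have h : (mulT3 k A ∘ₗ alpha1 α ∘ₗ trR br c) = E1 α br c := by
    apply TensorProduct.ext'
    intro x y
    simp only [LinearMap.comp_apply, trR, TensorProduct.map_tmul, LinearMap.id_apply,
      LinearMap.flip_apply, E1_tmul]
    induction br y c using TensorProduct.induction_on with
    | zero => simp
    | tmul p q =>
        simp [alpha1, mulT3, TensorProduct.assoc_symm_tmul, mul_assoc]
    | add u v hu hv => simp only [TensorProduct.tmul_add, map_add, hu, hv, mul_add]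
  exact LinearMap.congr_fun h d

lemma G2_apply (a : A) (d : A ⊗[k] A) :
    mulT3 k A (tau123 k A (alpha1 α (trR br a d))) = Mm2 α br a d := by
  have h : (mulT3 k A ∘ₗ tau123 k A ∘ₗ alpha1 α ∘ₗ trR br a) = Mm2 α br a := by
    apply TensorProduct.ext'
    intro x y
    simp only [LinearMap.comp_apply, trR, TensorProduct.map_tmul, LinearMap.id_apply,
      LinearMap.flip_apply, Mm2_tmul]
    induction br y a using TensorProduct.induction_on with
    | zero => simp
    | tmul p q =>
        simp [alpha1, mulT3, tau123, TensorProduct.assoc_symm_tmul, mul_assoc]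
    | add u v hu hv =>
        simp only [TensorProduct.tmul_add, map_add, hu, hv]
  exact LinearMap.congr_fun h d

lemma G3_apply (b : A) (d : A ⊗[k] A) :
    mulT3 k A (tau132 k A (alpha1 α (trR br b d))) = E2 α br b (swapT k A d) := by
  have h : (mulT3 k A ∘ₗ tau132 k A ∘ₗ alpha1 α ∘ₗ trR br b)
      = E2 α br b ∘ₗ swapT k A := by
    apply TensorProduct.ext'
    intro x y
    simp only [LinearMap.comp_apply, trR, TensorProduct.map_tmul, LinearMap.id_apply,
      LinearMap.flip_apply, swapT_tmul, E2_tmul]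
    induction br y b using TensorProduct.induction_on with
    | zero => simp
    | tmul p q =>
        simp [alpha1, mulT3, tau132, TensorProduct.assoc_symm_tmul, mul_assoc]
    | add u v hu hv => simp only [TensorProduct.tmul_add, map_add, hu, hv, add_mul]
  exact LinearMap.congr_fun h d

lemma mu_swap_sub_mem (d : A ⊗[k] A) :
    LinearMap.mul' k A d - LinearMap.mul' k A (swapT k A d) ∈ commSpan k A := by
  induction d using TensorProduct.induction_on with
  | zero => simp [Submodule.zero_mem]
  | tmul p q =>
      exact Submodule.subset_span ⟨p, q, by simp⟩
  | add u v hu hv =>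
      have : LinearMap.mul' k A (u + v) - LinearMap.mul' k A (swapT k A (u + v))
          = (LinearMap.mul' k A u - LinearMap.mul' k A (swapT k A u))
            + (LinearMap.mul' k A v - LinearMap.mul' k A (swapT k A v)) := by
        simp only [map_add]; abel
      rw [this]
      exact Submodule.add_mem _ hu hv

end AuxLemmas

section MuLemmas

variable {k A : Type*} [CommSemiring k] [Ring A] [Algebra k A]

lemma mu_lmul (w : A) (d : A ⊗[k] A) :
    LinearMap.mul' k A ((w ⊗ₜ[k] (1 : A)) * d) = w * LinearMap.mul' k A d := by
  induction d using TensorProduct.induction_on with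
  | zero => simp
  | tmul p q => simp [Algebra.TensorProduct.tmul_mul_tmul, mul_assoc]
  | add u v hu hv => simp only [mul_add, map_add, hu, hv]

lemma mu_rmul (w : A) (d : A ⊗[k] A) :
    LinearMap.mul' k A (d * ((1 : A) ⊗ₜ[k] w)) = LinearMap.mul' k A d * w := by
  induction d using TensorProduct.induction_on with
  | zero => simp
  | tmul p q => simp [Algebra.TensorProduct.tmul_mul_tmul, mul_assoc]
  | add u v hu hv => simp only [add_mul, map_add, hu, hv]

lemma mu_mid_left (w : A) (d : A ⊗[k] A) :
    LinearMap.mul' k A (((1 : A) ⊗ₜ[k] w) * d) = Nmap k A (w ⊗ₜ[k] d) := by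
  induction d using TensorProduct.induction_on with
  | zero => simp
  | tmul p q => simp [Algebra.TensorProduct.tmul_mul_tmul, mul_assoc]
  | add u v hu hv =>
      simp only [mul_add, map_add, TensorProduct.tmul_add, hu, hv]

lemma mu_mid_right (w : A) (d : A ⊗[k] A) :
    LinearMap.mul' k A (d * (w ⊗ₜ[k] (1 : A))) = Nmap k A (w ⊗ₜ[k] d) := by
  induction d using TensorProduct.induction_on with
  | zero => simp
  | tmul p q => simp [Algebra.TensorProduct.tmul_mul_tmul, mul_assoc]
  | add u v hu hv =>
      simp only [add_mul, map_add, TensorProduct.tmul_add, hu, hv]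

end MuLemmas

section SLemmas

variable {k A : Type*} [CommSemiring k] [Ring A] [Algebra k A]
variable (α : A ≃ₐ[k] A) (S : BimodStr k A)
variable (hS : ∀ (a b : A) (d : A ⊗[k] A),
      S.act a d b = ((1 : A) ⊗ₜ[k] (α a)) * d * ((α b) ⊗ₜ[k] (1 : A)))

include hS

lemma star_eq (a b : A) (d : A ⊗[k] A) :
    S.star a d b = ((α a) ⊗ₜ[k] (1 : A)) * d * ((1 : A) ⊗ₜ[k] (α b)) := by
  rw [BimodOn.star, hS]
  induction d using TensorProduct.induction_on with
  | zero => simp [swapT]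
  | tmul p q => simp [swapT, Algebra.TensorProduct.tmul_mul_tmul]
  | add u v hu hv =>
      simp only [map_add, mul_add, add_mul, hu, hv]

lemma mu_star_left (x : A) (d : A ⊗[k] A) :
    LinearMap.mul' k A (S.star x d 1) = α x * LinearMap.mul' k A d := by
  rw [star_eq α S hS, map_one]
  have : ((1 : A) ⊗ₜ[k] (1 : A)) = (1 : A ⊗[k] A) := rfl
  rw [this, mul_one, mu_lmul]

lemma mu_star_right (y : A) (d : A ⊗[k] A) :
    LinearMap.mul' k A (S.star 1 d y) = LinearMap.mul' k A d * α y := by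
  rw [star_eq α S hS, map_one]
  have : ((1 : A) ⊗ₜ[k] (1 : A)) = (1 : A ⊗[k] A) := rfl
  rw [this, one_mul, mu_rmul]

lemma mu_act_left (x : A) (d : A ⊗[k] A) :
    LinearMap.mul' k A (S.act x d 1) = Nmap k A (α x ⊗ₜ[k] d) := by
  rw [hS, map_one]
  have : ((1 : A) ⊗ₜ[k] (1 : A)) = (1 : A ⊗[k] A) := rfl
  rw [this, mul_one, mu_mid_left]

lemma mu_act_right (y : A) (d : A ⊗[k] A) :
    LinearMap.mul' k A (S.act 1 d y) = Nmap k A (α y ⊗ₜ[k] d) := by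
  rw [hS, map_one]
  have : ((1 : A) ⊗ₜ[k] (1 : A)) = (1 : A ⊗[k] A) := rfl
  rw [this, one_mul, mu_mid_right]

end SLemmas

section DLemmas

variable {k A : Type*} [CommSemiring k] [Ring A] [Algebra k A]
variable (α : A ≃ₐ[k] A) (S : BimodStr k A)
variable (hS : ∀ (a b : A) (d : A ⊗[k] A),
      S.act a d b = ((1 : A) ⊗ₜ[k] (α a)) * d * ((α b) ⊗ₜ[k] (1 : A)))
variable (D : DoubleBracket S)

lemma swapT_br (a b : A) : swapT k A (D.br a b) = - D.br b a := by
  have := D.antisymm b a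
  rw [this]
  exact (neg_neg _).symm

lemma Mm2_eq_neg_Mm (a : A) (d : A ⊗[k] A) :
    Mm2 α D.br a d = - Mm α D.br a d := by
  have h : Mm2 α D.br a = - Mm α D.br a := by
    apply TensorProduct.ext'
    intro x y
    rw [Mm2_tmul, LinearMap.neg_apply, Mm_tmul, swapT_br S D]
    exact map_neg (Nmap k A ∘ₗ TensorProduct.mk k A (A ⊗[k] A) (α x)) (D.br a y)
  rw [h]; simp

include hS

/-- `m ⟪x*y, c⟫ = α x * m ⟪y,c⟫ + m ⟪x,c⟫ * α y`. -/
lemma mu_br_mul_left (c x y : A) :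
    LinearMap.mul' k A (D.br (x * y) c)
      = E1 α D.br c (x ⊗ₜ[k] y) + E2 α D.br c (x ⊗ₜ[k] y) := by
  rw [D.leibniz_left c x y, map_add, mu_star_left α S hS, mu_star_right α S hS,
    E1_tmul, E2_tmul]

/-- `m ⟪a, x*y⟫ = Mm a (x⊗y) + Mm a (y⊗x)`. -/
lemma mu_br_mul_right (a x y : A) :
    LinearMap.mul' k A (D.br a (x * y))
      = Mm α D.br a (x ⊗ₜ[k] y) + Mm α D.br a (y ⊗ₜ[k] x) := by
  rw [D.leibniz_right a x y, map_add, mu_act_left α S hS, mu_act_right α S hS,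
    Mm_tmul, Mm_tmul]

/-- `m ∘ ⟪-, c⟫ ∘ m` as applied to a general tensor. -/
lemma Lc_eq (c : A) (d : A ⊗[k] A) :
    LinearMap.mul' k A (D.br (LinearMap.mul' k A d) c)
      = E1 α D.br c d + E2 α D.br c d := by
  induction d using TensorProduct.induction_on with
  | zero => simp
  | tmul x y => simpa using mu_br_mul_left α S hS D c x y
  | add u v hu hv =>
      simp only [map_add, LinearMap.add_apply, hu, hv]; abel

lemma Ra_eq (a : A) (d : A ⊗[k] A) :
    LinearMap.mul' k A (D.br a (LinearMap.mul' k A d))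
      = Mm α D.br a d + Mm α D.br a (swapT k A d) := by
  induction d using TensorProduct.induction_on with
  | zero => simp
  | tmul x y => simpa using mu_br_mul_right α S hS D a x y
  | add u v hu hv =>
      simp only [map_add, LinearMap.add_apply, hu, hv]; abel

end DLemmas

/-- Proposition `In-Lod`: for a double bracket associated with the
`α`-twisted inner bimodule structure with
`m ∘ ⟪-,-,-⟫_{R,α} - m ∘ ⟪-,-,-⟫_{R,α} ∘ τ_{(23)} = 0`, the map
`{a,b}_m = ⟪a,b⟫'⟪a,b⟫''` is a right Loday bracket on `A` and descends to a Lie bracket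
on `A/[A,A]`. -/
theorem twisted_inner_right_loday
    {k A : Type*} [Field k] [CharZero k] [Ring A] [Algebra k A]
    (α : A ≃ₐ[k] A)
    (S : BimodStr k A)
    (hS : ∀ (a b : A) (d : A ⊗[k] A),
      S.act a d b = ((1 : A) ⊗ₜ[k] (α a)) * d * ((α b) ⊗ₜ[k] (1 : A)))
    (D : DoubleBracket S)
    (hm : ∀ a b c : A,
      mulT3 k A (jacRAlpha α D.br a b c) = mulT3 k A (jacRAlpha α D.br a c b)) :
    (∀ a b c : A, brm D.br (brm D.br a b) c
      = brm D.br a (brm D.br b c) + brm D.br (brm D.br a c) b) ∧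
    (∃ L : (A ⧸ commSpan k A) →ₗ[k] (A ⧸ commSpan k A) →ₗ[k] (A ⧸ commSpan k A),
      (∀ a b : A, L (Submodule.Quotient.mk a) (Submodule.Quotient.mk b)
        = Submodule.Quotient.mk (brm D.br a b)) ∧
      (∀ x y, L x y = - L y x) ∧
      (∀ x y z, L x (L y z) = L (L x y) z + L y (L x z))) := by
  -- The right Loday identity
  have hLod : ∀ a b c : A, brm D.br (brm D.br a b) c
      = brm D.br a (brm D.br b c) + brm D.br (brm D.br a c) b := by
    intro a b c
    have hj1 : mulT3 k A (jacRAlpha α D.br a b c)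
        = E1 α D.br c (D.br a b) - Mm α D.br a (D.br b c)
          - E2 α D.br b (D.br a c) := by
      rw [jacRAlpha, map_add, map_add, G1_apply, G2_apply, G3_apply,
        Mm2_eq_neg_Mm α S D, swapT_br S D, map_neg]
      abel
    have hj2 : mulT3 k A (jacRAlpha α D.br a c b)
        = E1 α D.br b (D.br a c) + Mm α D.br a (swapT k A (D.br b c))
          - E2 α D.br c (D.br a b) := by
      rw [jacRAlpha, map_add, map_add, G1_apply, G2_apply, G3_apply,
        Mm2_eq_neg_Mm α S D, swapT_br S D, map_neg,
        D.antisymm c b, map_neg]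
      abel
    have H : E1 α D.br c (D.br a b) - Mm α D.br a (D.br b c)
          - E2 α D.br b (D.br a c)
        = E1 α D.br b (D.br a c) + Mm α D.br a (swapT k A (D.br b c))
          - E2 α D.br c (D.br a b) := by
      rw [← hj1, ← hj2]; exact hm a b c
    show LinearMap.mul' k A (D.br (LinearMap.mul' k A (D.br a b)) c)
        = LinearMap.mul' k A (D.br a (LinearMap.mul' k A (D.br b c)))
          + LinearMap.mul' k A (D.br (LinearMap.mul' k A (D.br a c)) b)
    rw [Lc_eq α S hS D, Lc_eq α S hS D, Ra_eq α S hS D]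
    rw [← sub_eq_zero] at H ⊢
    rw [← H]
    abel
  refine ⟨hLod, ?_⟩
  -- The bilinear map {a,b}_m as a bundled bilinear map
  set Bb : A →ₗ[k] A →ₗ[k] A :=
    { toFun := fun a => LinearMap.mul' k A ∘ₗ D.br a
      map_add' := fun a a' => by
        ext x
        simp [map_add]
      map_smul' := fun r a => by
        ext x
        simp } with hBbdef
  have hBb : ∀ a b : A, Bb a b = brm D.br a b := fun a b => rfl
  -- the bracket kills commutators on the right
  have hright0 : ∀ (a x : A), x ∈ commSpan k A → Bb a x = 0 := by
    intro a x hx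
    induction hx using Submodule.span_induction with
    | mem y hy =>
        obtain ⟨u, v, rfl⟩ := hy
        have h1 := Ra_eq α S hS D a (u ⊗ₜ[k] v)
        have h2 := Ra_eq α S hS D a (v ⊗ₜ[k] u)
        simp only [LinearMap.mul'_apply, swapT_tmul] at h1 h2
        show LinearMap.mul' k A (D.br a (u * v - v * u)) = 0
        rw [map_sub, map_sub, h1, h2]
        abel
    | zero => simp
    | add x y _ _ hx' hy' =>
        rw [map_add, hx', hy', add_zero]
    | smul r x _ hx' =>
        rw [map_smul, hx', smul_zero]
  -- the bracket preserves commutators on the left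
  have hleft : ∀ (b x : A), x ∈ commSpan k A → Bb x b ∈ commSpan k A := by
    intro b x hx
    induction hx using Submodule.span_induction with
    | mem y hy =>
        obtain ⟨u, v, rfl⟩ := hy
        have h1 := Lc_eq α S hS D b (u ⊗ₜ[k] v)
        have h2 := Lc_eq α S hS D b (v ⊗ₜ[k] u)
        simp only [LinearMap.mul'_apply] at h1 h2
        have hkey : Bb (u * v - v * u) b
            = (α u * LinearMap.mul' k A (D.br v b)
                - LinearMap.mul' k A (D.br v b) * α u)
              + (LinearMap.mul' k A (D.br u b) * α v
                - α v * LinearMap.mul' k A (D.br u b)) := by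
          show LinearMap.mul' k A (D.br (u * v - v * u) b) = _
          rw [map_sub, LinearMap.sub_apply, map_sub, h1, h2,
            E1_tmul, E1_tmul, E2_tmul, E2_tmul]
          abel
        rw [hkey]
        exact Submodule.add_mem _ (Submodule.subset_span ⟨_, _, rfl⟩)
          (Submodule.subset_span ⟨_, _, rfl⟩)
    | zero => simp [Submodule.zero_mem]
    | add x y _ _ hx' hy' =>
        have : Bb (x + y) b = Bb x b + Bb y b := by
          rw [map_add, LinearMap.add_apply]
        rw [this]
        exact Submodule.add_mem _ hx' hy'
    | smul r x _ hx' =>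
        have : Bb (r • x) b = r • Bb x b := by
          rw [map_smul, LinearMap.smul_apply]
        rw [this]
        exact Submodule.smul_mem _ _ hx'
  -- antisymmetry modulo commutators
  have hanti : ∀ a b : A, Bb a b + Bb b a ∈ commSpan k A := by
    intro a b
    have he : Bb a b + Bb b a
        = LinearMap.mul' k A (D.br b a)
          - LinearMap.mul' k A (swapT k A (D.br b a)) := by
      show LinearMap.mul' k A (D.br a b) + LinearMap.mul' k A (D.br b a) = _
      rw [D.antisymm a b, map_neg]
      abel
    rw [he]
    exact mu_swap_sub_mem (D.br b a)
  -- construct the quotient bracket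
  have hker : ∀ a : A,
      commSpan k A ≤ LinearMap.ker ((commSpan k A).mkQ ∘ₗ Bb a) := by
    intro a x hx
    simp [LinearMap.mem_ker, hright0 a x hx]
  set L1 : A → (A ⧸ commSpan k A) →ₗ[k] (A ⧸ commSpan k A) :=
    fun a => (commSpan k A).liftQ ((commSpan k A).mkQ ∘ₗ Bb a) (hker a) with hL1def
  have hL1 : ∀ a b : A, L1 a (Submodule.Quotient.mk b)
      = Submodule.Quotient.mk (Bb a b) := by
    intro a b
    rw [hL1def]
    rw [Submodule.liftQ_apply]
    rfl
  set L2 : A →ₗ[k] (A ⧸ commSpan k A) →ₗ[k] (A ⧸ commSpan k A) :=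
    { toFun := L1
      map_add' := fun a a' => by
        apply LinearMap.ext
        intro q
        obtain ⟨b, rfl⟩ := Submodule.Quotient.mk_surjective _ q
        rw [LinearMap.add_apply, hL1, hL1, hL1, map_add, LinearMap.add_apply,
          Submodule.Quotient.mk_add]
      map_smul' := fun r a => by
        apply LinearMap.ext
        intro q
        obtain ⟨b, rfl⟩ := Submodule.Quotient.mk_surjective _ q
        rw [RingHom.id_apply, LinearMap.smul_apply, hL1, hL1, map_smul,
          LinearMap.smul_apply, Submodule.Quotient.mk_smul] } with hL2def
  have hL2 : ∀ a b : A, L2 a (Submodule.Quotient.mk b)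
      = Submodule.Quotient.mk (Bb a b) := hL1
  have hL2ker : commSpan k A ≤ LinearMap.ker L2 := by
    intro a ha
    rw [LinearMap.mem_ker]
    apply LinearMap.ext
    intro q
    obtain ⟨b, rfl⟩ := Submodule.Quotient.mk_surjective _ q
    rw [hL2, LinearMap.zero_apply]
    exact (Submodule.Quotient.mk_eq_zero _).mpr (hleft b a ha)
  refine ⟨(commSpan k A).liftQ L2 hL2ker, ?_, ?_, ?_⟩
  · intro a b
    rw [Submodule.liftQ_apply, hL2]
    rfl
  · intro x y
    obtain ⟨a, rfl⟩ := Submodule.Quotient.mk_surjective _ x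
    obtain ⟨b, rfl⟩ := Submodule.Quotient.mk_surjective _ y
    simp only [Submodule.liftQ_apply, hL2]
    have h0 : (Submodule.Quotient.mk (Bb a b + Bb b a)
        : A ⧸ commSpan k A) = 0 :=
      (Submodule.Quotient.mk_eq_zero _).mpr (hanti a b)
    rw [Submodule.Quotient.mk_add] at h0
    exact eq_neg_of_add_eq_zero_left h0
  · intro x y z
    obtain ⟨a, rfl⟩ := Submodule.Quotient.mk_surjective _ x
    obtain ⟨b, rfl⟩ := Submodule.Quotient.mk_surjective _ y
    obtain ⟨c, rfl⟩ := Submodule.Quotient.mk_surjective _ z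
    simp only [Submodule.liftQ_apply, hL2]
    have hLod' : Bb (Bb a b) c = Bb a (Bb b c) + Bb (Bb a c) b := hLod a b c
    have h0 : (Submodule.Quotient.mk (Bb (Bb a c) b + Bb b (Bb a c))
        : A ⧸ commSpan k A) = 0 :=
      (Submodule.Quotient.mk_eq_zero _).mpr (hanti _ _)
    rw [Submodule.Quotient.mk_add] at h0
    calc (Submodule.Quotient.mk (Bb a (Bb b c)) : A ⧸ commSpan k A)
        = Submodule.Quotient.mk (Bb a (Bb b c))
            + (Submodule.Quotient.mk (Bb (Bb a c) b)
              + Submodule.Quotient.mk (Bb b (Bb a c))) := by rw [h0, add_zero]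
      _ = Submodule.Quotient.mk (Bb a (Bb b c) + Bb (Bb a c) b)
            + Submodule.Quotient.mk (Bb b (Bb a c)) := by
            rw [Submodule.Quotient.mk_add]; abel
      _ = Submodule.Quotient.mk (Bb (Bb a b) c)
            + Submodule.Quotient.mk (Bb b (Bb a c)) := by rw [← hLod']
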